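/- arXiv:1404.6821 — 3 statements merged into one kernel-verified Lean document; each statement's English description precedes it below -/
import Mathlib

section
/- For every integer t ≥ 2, the graph Θ_{2,2,2,2t} is not (4:2)-choosable. -/
/-- `f` is a `b`-tuple `L`-colouring of `G`: each vertex gets a `b`-set of colours
from its list, and adjacent vertices get disjoint sets. -/
def IsTupleListColoring {V : Type*} (G : SimpleGraph V) (L : V → Finset ℕ) (b : ℕ)
    (f : V → Finset ℕ) : Prop :=
  (∀ v, f v ⊆ L v) ∧ (∀ v, (f v).card = b) ∧ ∀ ⦃u v⦄, G.Adj u v → Disjoint (f u) (f v)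

/-- `G` is `(L:b)`-colourable. -/
def ListColorable {V : Type*} (G : SimpleGraph V) (L : V → Finset ℕ) (b : ℕ) : Prop :=
  ∃ f, IsTupleListColoring G L b f

/-- `G` is `(a:b)`-choosable. -/
def Choosable {V : Type*} (G : SimpleGraph V) (a b : ℕ) : Prop :=
  ∀ L : V → Finset ℕ, (∀ v, (L v).card = a) → ListColorable G L b

/-- `G` is the theta graph `Θ_{r,s,t}`: two vertices `u ≠ v` joined by three internally
vertex-disjoint paths of `r`, `s`, `t` edges, which together cover all vertices and edges. -/
def IsThetaGraph {V : Type*} (G : SimpleGraph V) (u v : V) (r s t : ℕ) : Prop :=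
  u ≠ v ∧ ∃ (P Q R : G.Walk u v),
    P.IsPath ∧ Q.IsPath ∧ R.IsPath ∧
    P.length = r ∧ Q.length = s ∧ R.length = t ∧
    (∀ x, x ∈ P.support → x ∈ Q.support → x = u ∨ x = v) ∧
    (∀ x, x ∈ P.support → x ∈ R.support → x = u ∨ x = v) ∧
    (∀ x, x ∈ Q.support → x ∈ R.support → x = u ∨ x = v) ∧
    (∀ x : V, x ∈ P.support ∨ x ∈ Q.support ∨ x ∈ R.support) ∧
    (∀ e ∈ G.edgeSet, e ∈ P.edges ∨ e ∈ Q.edges ∨ e ∈ R.edges)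

/-- `G` is the generalized theta graph `Θ_{a,b,c,d}`: two vertices `u ≠ v` joined by four
internally vertex-disjoint paths of `a`, `b`, `c`, `d` edges, covering all vertices and
edges of `G`. -/
def IsTheta4Graph {V : Type*} (G : SimpleGraph V) (u v : V) (a b c d : ℕ) : Prop :=
  u ≠ v ∧ ∃ (P Q R S : G.Walk u v),
    P.IsPath ∧ Q.IsPath ∧ R.IsPath ∧ S.IsPath ∧
    P.length = a ∧ Q.length = b ∧ R.length = c ∧ S.length = d ∧
    (∀ x, x ∈ P.support → x ∈ Q.support → x = u ∨ x = v) ∧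
    (∀ x, x ∈ P.support → x ∈ R.support → x = u ∨ x = v) ∧
    (∀ x, x ∈ P.support → x ∈ S.support → x = u ∨ x = v) ∧
    (∀ x, x ∈ Q.support → x ∈ R.support → x = u ∨ x = v) ∧
    (∀ x, x ∈ Q.support → x ∈ S.support → x = u ∨ x = v) ∧
    (∀ x, x ∈ R.support → x ∈ S.support → x = u ∨ x = v) ∧
    (∀ x : V, x ∈ P.support ∨ x ∈ Q.support ∨ x ∈ R.support ∨ x ∈ S.support) ∧
    (∀ e ∈ G.edgeSet, e ∈ P.edges ∨ e ∈ Q.edges ∨ e ∈ R.edges ∨ e ∈ S.edges)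

/-!
A `2`-tuple colouring from lists all equal to one `4`-set `C` alternates along a path: each vertex
gets the complement in `C` of its neighbour's pair. Put `{1,2,3,4}` on the vertices
`s₃, …, s_{2t-1}` of the long path `u = s₀, s₁, …, s_{2t} = v`; since `s₃ ⋯ s_{2t-1}` has an even
number of edges, `f s_{2t-1} = f s₃`, so the colouring behaves as one of `Θ_{2,2,2,4}` with long
path `u s₁ s₂ s₃ v`. The lists `L u = {1,2,3,4}`, `L v = {1,3,5,6}`, `L s₁ = {1,2,3,5}`,
`L s₂ = {1,2,4,5}` and `{1,2,5,6}`, `{1,3,4,5}`, `{1,3,4,6}` on the three midpoints of the short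
paths admit no such colouring, which is a finite check.
-/

open SimpleGraph

theorem Finset.eq_sdiff_of_disjoint_of_card_le {α : Type*} [DecidableEq α] {s t u : Finset α}
    (hs : s ⊆ u) (ht : t ⊆ u) (hst : Disjoint s t) (hcard : u.card ≤ s.card + t.card) :
    t = u \ s :=
  Finset.eq_of_subset_of_card_le (Finset.subset_sdiff.2 ⟨ht, hst.symm⟩)
    (by rw [Finset.card_sdiff_of_subset hs]; omega)

namespace IsTupleListColoring

variable {V : Type*} {G : SimpleGraph V} {L : V → Finset ℕ} {b : ℕ} {f : V → Finset ℕ}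

theorem eq_sdiff_of_adj (hf : IsTupleListColoring G L b f) {x y : V} {C : Finset ℕ}
    (hxy : G.Adj x y) (hx : L x = C) (hy : L y = C) (hC : C.card = 2 * b) : f x = C \ f y :=
  Finset.eq_sdiff_of_disjoint_of_card_le (hy ▸ hf.1 y) (hx ▸ hf.1 x) (hf.2.2 hxy).symm
    (by rw [hf.2.1, hf.2.1]; omega)

theorem eq_of_adj_of_adj (hf : IsTupleListColoring G L b f) {x y z : V} {C : Finset ℕ}
    (hxy : G.Adj x y) (hyz : G.Adj y z) (hx : L x = C) (hy : L y = C) (hz : L z = C)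
    (hC : C.card = 2 * b) : f x = f z :=
  (hf.eq_sdiff_of_adj hxy hx hy hC).trans (hf.eq_sdiff_of_adj hyz.symm hz hy hC).symm

theorem getVert_add_two_mul_eq (hf : IsTupleListColoring G L b f) {w w' : V}
    (p : G.Walk w w') {C : Finset ℕ} (hC : C.card = 2 * b) {m n : ℕ} (hn : n ≤ p.length)
    (hL : ∀ i, m ≤ i → i ≤ n → L (p.getVert i) = C) :
    ∀ k, m + 2 * k ≤ n → f (p.getVert (m + 2 * k)) = f (p.getVert m)
  | 0, _ => rfl
  | k + 1, hk => by
    have hadj (i : ℕ) (hi : i + 1 ≤ n) : G.Adj (p.getVert i) (p.getVert (i + 1)) :=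
      p.adj_getVert_succ (by omega)
    rw [← hf.getVert_add_two_mul_eq p hC hn hL k (by omega),
      show m + 2 * (k + 1) = m + 2 * k + 1 + 1 by ring]
    exact (hf.eq_of_adj_of_adj (hadj _ (by omega)) (hadj _ (by omega)) (hL _ (by omega) (by omega))
      (hL _ (by omega) (by omega)) (hL _ (by omega) (by omega)) hC).symm

theorem le_card_sdiff_union (hf : IsTupleListColoring G L b f) {x w y : V} (hxw : G.Adj x w)
    (hwy : G.Adj w y) : b ≤ (L w \ (f x ∪ f y)).card := by
  have hsub : f w ⊆ L w \ (f x ∪ f y) :=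
    Finset.subset_sdiff.2 ⟨hf.1 w, Finset.disjoint_union_right.2 ⟨(hf.2.2 hxw).symm, hf.2.2 hwy⟩⟩
  simpa only [hf.2.1] using Finset.card_le_card hsub

end IsTupleListColoring

/- `A`, `A₁`, `A₂`, `A₃`, `B` are the pairs on `u, s₁, s₂, s₃, v`; each midpoint of a short path
needs two colours of its list outside `A ∪ B`. -/
theorem theta2224_lists_obstruction :
    ∀ A ∈ Finset.powersetCard 2 ({1,2,3,4} : Finset ℕ),
    ∀ B ∈ Finset.powersetCard 2 ({1,3,5,6} : Finset ℕ),
    ∀ A₁ ∈ Finset.powersetCard 2 ({1,2,3,5} : Finset ℕ),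
    ∀ A₂ ∈ Finset.powersetCard 2 ({1,2,4,5} : Finset ℕ),
    ∀ A₃ ∈ Finset.powersetCard 2 ({1,2,3,4} : Finset ℕ),
    Disjoint A A₁ → Disjoint A₁ A₂ → Disjoint A₂ A₃ → Disjoint A₃ B →
    2 ≤ (({1,2,5,6} : Finset ℕ) \ (A ∪ B)).card →
    2 ≤ (({1,3,4,5} : Finset ℕ) \ (A ∪ B)).card →
    2 ≤ (({1,3,4,6} : Finset ℕ) \ (A ∪ B)).card → False := by
  decide

theorem not_listColorable_of_theta_lists {V : Type*} {G : SimpleGraph V} {L : V → Finset ℕ}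
    {u v p q r : V} (t : ℕ) (ht : 2 ≤ t) (S : G.Walk u v) (hS : S.length = 2 * t)
    (hup : G.Adj u p) (hpv : G.Adj p v) (huq : G.Adj u q) (hqv : G.Adj q v)
    (hur : G.Adj u r) (hrv : G.Adj r v)
    (hLu : L u = {1,2,3,4}) (hLv : L v = {1,3,5,6}) (hLp : L p = {1,2,5,6})
    (hLq : L q = {1,3,4,5}) (hLr : L r = {1,3,4,6})
    (hLS : ∀ i, 0 < i → i < 2 * t → L (S.getVert i) =
      if i = 1 then {1,2,3,5} else if i = 2 then {1,2,4,5} else {1,2,3,4}) :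
    ¬ ListColorable G L 2 := by
  rintro ⟨f, hf⟩
  have hadj (i : ℕ) (hi : i < 2 * t) : G.Adj (S.getVert i) (S.getVert (i + 1)) :=
    S.adj_getVert_succ (hS ▸ hi)
  have hmem (x : V) {C : Finset ℕ} (hx : L x = C) : f x ∈ Finset.powersetCard 2 C :=
    Finset.mem_powersetCard.2 ⟨hx ▸ hf.1 x, hf.2.1 x⟩
  have hperiodic : f (S.getVert (2 * t - 1)) = f (S.getVert 3) := by
    have h := hf.getVert_add_two_mul_eq S (C := {1,2,3,4}) rfl (m := 3) (n := 2 * t - 1)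
      (by omega) (fun i h3 hi => by simp [hLS i (by omega) (by omega), show i ≠ 1 by omega,
        show i ≠ 2 by omega]) (t - 2) (by omega)
    rwa [show 3 + 2 * (t - 2) = 2 * t - 1 by omega] at h
  have hlast : G.Adj (S.getVert (2 * t - 1)) v := by
    have h := hadj (2 * t - 1) (by omega)
    rwa [show 2 * t - 1 + 1 = S.length by omega, S.getVert_length] at h
  exact theta2224_lists_obstruction _ (hmem u hLu) _ (hmem v hLv)
    _ (hmem _ (by simpa using hLS 1 (by omega) (by omega)))
    _ (hmem _ (by simpa using hLS 2 (by omega) (by omega)))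
    _ (hmem _ (by simpa using hLS 3 (by omega) (by omega)))
    (by simpa using hf.2.2 (hadj 0 (by omega))) (hf.2.2 (hadj 1 (by omega)))
    (hf.2.2 (hadj 2 (by omega))) (hperiodic ▸ hf.2.2 hlast)
    (hLp ▸ hf.le_card_sdiff_union hup hpv) (hLq ▸ hf.le_card_sdiff_union huq hqv)
    (hLr ▸ hf.le_card_sdiff_union hur hrv)

namespace SimpleGraph.Walk

variable {V : Type*} {G : SimpleGraph V} {u v : V}

theorem adj_getVert_one_of_length_eq_two {W : G.Walk u v} (hW : W.length = 2) :
    G.Adj u (W.getVert 1) ∧ G.Adj (W.getVert 1) v := by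
  constructor
  · simpa using W.adj_getVert_succ (i := 0) (by omega)
  · simpa [← hW] using W.adj_getVert_succ (i := 1) (by omega)

theorem IsPath.getVert_ne_start {W : G.Walk u v} (hW : W.IsPath) {i : ℕ} (h0 : 0 < i)
    (hi : i ≤ W.length) : W.getVert i ≠ u :=
  (hW.getVert_eq_start_iff hi).not.2 (by omega)

theorem IsPath.getVert_ne_end {W : G.Walk u v} (hW : W.IsPath) {i : ℕ} (hi : i < W.length) :
    W.getVert i ≠ v :=
  (hW.getVert_eq_end_iff hi.le).not.2 (by omega)

theorem IsPath.getVert_notMem_support {W W' : G.Walk u v} (hW : W.IsPath)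
    (hdisj : ∀ x, x ∈ W'.support → x ∈ W.support → x = u ∨ x = v) {i : ℕ} (h0 : 0 < i)
    (hi : i < W.length) : W.getVert i ∉ W'.support := fun h =>
  (hdisj _ h (W.getVert_mem_support i)).elim (hW.getVert_ne_start h0 hi.le)
    (hW.getVert_ne_end hi)

end SimpleGraph.Walk

section ThetaLists

variable {V : Type*} {G : SimpleGraph V} {u v : V} {P Q R S : G.Walk u v}

open Classical in
noncomputable def thetaLists (u v : V) (P Q R S : G.Walk u v) (x : V) : Finset ℕ :=
  if x = u then {1,2,3,4} else if x = v then {1,3,5,6}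
  else if x ∈ P.support then {1,2,5,6} else if x ∈ Q.support then {1,3,4,5}
  else if x ∈ R.support then {1,3,4,6} else if x = S.getVert 1 then {1,2,3,5}
  else if x = S.getVert 2 then {1,2,4,5} else {1,2,3,4}

theorem card_thetaLists (x : V) : (thetaLists u v P Q R S x).card = 4 := by
  unfold thetaLists
  split_ifs <;> rfl

theorem thetaLists_start : thetaLists u v P Q R S u = {1,2,3,4} := by
  simp [thetaLists]

theorem thetaLists_end (huv : u ≠ v) : thetaLists u v P Q R S v = {1,3,5,6} := by
  simp [thetaLists, huv.symm]

theorem thetaLists_getVert_one_first (hP : P.IsPath) (hPl : P.length = 2) :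
    thetaLists u v P Q R S (P.getVert 1) = {1,2,5,6} := by
  simp [thetaLists, hP.getVert_ne_start one_pos (by omega), hP.getVert_ne_end (i := 1) (by omega)]

theorem thetaLists_getVert_one_second (hQ : Q.IsPath) (hQl : Q.length = 2)
    (hPQ : ∀ x, x ∈ P.support → x ∈ Q.support → x = u ∨ x = v) :
    thetaLists u v P Q R S (Q.getVert 1) = {1,3,4,5} := by
  simp [thetaLists, hQ.getVert_ne_start one_pos (by omega),
    hQ.getVert_ne_end (i := 1) (by omega), hQ.getVert_notMem_support hPQ one_pos (by omega)]

theorem thetaLists_getVert_one_third (hR : R.IsPath) (hRl : R.length = 2)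
    (hPR : ∀ x, x ∈ P.support → x ∈ R.support → x = u ∨ x = v)
    (hQR : ∀ x, x ∈ Q.support → x ∈ R.support → x = u ∨ x = v) :
    thetaLists u v P Q R S (R.getVert 1) = {1,3,4,6} := by
  simp [thetaLists, hR.getVert_ne_start one_pos (by omega),
    hR.getVert_ne_end (i := 1) (by omega), hR.getVert_notMem_support hPR one_pos (by omega),
    hR.getVert_notMem_support hQR one_pos (by omega)]

theorem thetaLists_getVert_fourth (hS : S.IsPath)
    (hPS : ∀ x, x ∈ P.support → x ∈ S.support → x = u ∨ x = v)
    (hQS : ∀ x, x ∈ Q.support → x ∈ S.support → x = u ∨ x = v)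
    (hRS : ∀ x, x ∈ R.support → x ∈ S.support → x = u ∨ x = v) {i : ℕ} (h0 : 0 < i)
    (hi : i < S.length) : thetaLists u v P Q R S (S.getVert i) =
      if i = 1 then {1,2,3,5} else if i = 2 then {1,2,4,5} else {1,2,3,4} := by
  have hinj {j : ℕ} (hj : j ≤ S.length) : S.getVert i = S.getVert j ↔ i = j :=
    hS.getVert_injOn.eq_iff hi.le hj
  simp [thetaLists, hS.getVert_ne_start h0 hi.le, hS.getVert_ne_end hi,
    hS.getVert_notMem_support hPS h0 hi, hS.getVert_notMem_support hQS h0 hi,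
    hS.getVert_notMem_support hRS h0 hi, hinj (j := 1) (by omega), hinj (j := 2) (by omega)]

end ThetaLists

/-- For every `t ≥ 2`, the graph `Θ_{2,2,2,2t}` is not `(4:2)`-choosable. -/
theorem theta2222t_not_choosable (t : ℕ) (ht : 2 ≤ t)
    (V : Type) (G : SimpleGraph V) (u v : V)
    (hG : IsTheta4Graph G u v 2 2 2 (2 * t)) :
    ¬ Choosable G 4 2 := by
  obtain ⟨huv, P, Q, R, S, hP, hQ, hR, hS, hPl, hQl, hRl, hSl,
    hPQ, hPR, hPS, hQR, hQS, hRS, -, -⟩ := hG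
  intro hch
  obtain ⟨hup, hpv⟩ := Walk.adj_getVert_one_of_length_eq_two hPl
  obtain ⟨huq, hqv⟩ := Walk.adj_getVert_one_of_length_eq_two hQl
  obtain ⟨hur, hrv⟩ := Walk.adj_getVert_one_of_length_eq_two hRl
  exact not_listColorable_of_theta_lists t ht S hSl hup hpv huq hqv hur hrv
    thetaLists_start (thetaLists_end huv) (thetaLists_getVert_one_first hP hPl)
    (thetaLists_getVert_one_second hQ hQl hPQ) (thetaLists_getVert_one_third hR hRl hPR hQR)
    (fun i h0 hi => thetaLists_getVert_fourth hS hPS hQS hRS h0 (hSl ▸ hi))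
    (hch _ fun _ => card_thetaLists _)
end

section
/- Let m be a positive integer, G a graph, and X ⊆ V(G) a set of vertices such that every component of G − X is a path with an odd number of vertices and such that no internal vertex of any such path has a neighbour in X. Let L be a list assignment on G with |L(v)| = 4m for every v ∉ X. Then G is (L:2m)-colourable if and only if the induced subgraph G[X] has a 2m-tuple L-colouring φ such that for every component path P of G − X, with vertices v_1, …, v_n in order: (i) |L(v_1) ∩ φ(N_X(v_1))| ≤ 2m, (ii) |L(v_n) ∩ φ(N_X(v_n))| ≤ 2m, and (iii) dam_{L,P}(φ(N_X(v_1)), φ(N_X(v_n))) ≤ S_L(P) − 2mn, where φ(N_X(w)) denotes the union of the colour sets φ(x) over all neighbours x of w lying in X. -/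
/-- Given the lists `L(v_1), …, L(v_n)` of a path (as a list of finsets, in order) and a
"previous" set, the sequence `X_1 = L(v_1)`, `X_i = L(v_i) \ X_{i-1}`. -/
def Xseq : Finset ℕ → List (Finset ℕ) → List (Finset ℕ)
  | _, [] => []
  | prev, l :: ls => (l \ prev) :: Xseq (l \ prev) ls

/-- `S_L(P) = Σ_{i=1}^n |X_i|`. -/
def SL (ls : List (Finset ℕ)) : ℕ := ((Xseq ∅ ls).map Finset.card).sum

/-- `X_{i+1}` (0-indexed access to the sequence `X_1, …, X_n`). -/
def Xat (ls : List (Finset ℕ)) (i : ℕ) : Finset ℕ := (Xseq ∅ ls).getD i ∅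

/-- `A = ∩_{x ∈ V(P)} L(x)`. -/
def Aset : List (Finset ℕ) → Finset ℕ
  | [] => ∅
  | a :: rest => rest.foldl (· ∩ ·) a

/-- For a colour `c`, the least 0-indexed position `i` with `c ∉ L(v_{i+1})`
(so the paper's `f(c)` is `firstMissing + 1`). -/
noncomputable def firstMissing (ls : List (Finset ℕ)) (c : ℕ) : ℕ :=
  sInf {i | i < ls.length ∧ c ∉ ls.getD i ∅}

open Classical in
/-- `X̂_1 = { c ∈ L(v_1) \ A : f(c) is even }` (with the paper's 1-indexed `f`,
i.e. `firstMissing` is odd). -/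
noncomputable def hatX1 (ls : List (Finset ℕ)) : Finset ℕ :=
  (ls.getD 0 ∅ \ Aset ls).filter fun c => Odd (firstMissing ls c)

/-- `X̂_n = X_n \ A`. -/
def hatXn (ls : List (Finset ℕ)) : Finset ℕ := Xat ls (ls.length - 1) \ Aset ls

/-- `L[p,q]`: delete the colours of `p` from `L(v_1)` and the colours of `q` from `L(v_n)`. -/
def delEnds (p q : Finset ℕ) (ls : List (Finset ℕ)) : List (Finset ℕ) :=
  ((ls.modifyHead (· \ p)).reverse.modifyHead (· \ q)).reverse

/-- The damage `dam_{L,P}(p,q) = S_L(P) − S_{L[p,q]}(P)` (as an integer). -/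
def damZ (ls : List (Finset ℕ)) (p q : Finset ℕ) : ℤ :=
  (SL ls : ℤ) - SL (delEnds p q ls)

/-- The path `v_1 ⋯ v_n` with lists `L(v_1), …, L(v_n)` admits a `b`-tuple list
colouring: consecutive vertices receive disjoint `b`-subsets of their lists. -/
def PathListColorable (b : ℕ) (ls : List (Finset ℕ)) : Prop :=
  ∃ f : ℕ → Finset ℕ,
    (∀ i, i < ls.length → f i ⊆ ls.getD i ∅ ∧ (f i).card = b) ∧
    (∀ i, i + 1 < ls.length → Disjoint (f i) (f (i + 1)))

open Classical in
/-- `φ(N_X(w))`: the union of the colour sets `φ x` over all neighbours `x` of `w`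
lying in `X`. -/
noncomputable def phiNX {V : Type*} (G : SimpleGraph V) (X : Finset V)
    (φ : V → Finset ℕ) (w : V) : Finset ℕ :=
  (X.filter fun x => G.Adj w x).biUnion φ

open Finset

def SLFrom (prev : Finset ℕ) (ls : List (Finset ℕ)) : ℕ :=
  ((Xseq prev ls).map Finset.card).sum

@[simp] lemma SLFrom_nil (prev : Finset ℕ) : SLFrom prev [] = 0 := rfl

@[simp] lemma SLFrom_cons (prev l : Finset ℕ) (t : List (Finset ℕ)) :
    SLFrom prev (l :: t) = (l \ prev).card + SLFrom (l \ prev) t := by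
  simp [SLFrom, Xseq]

lemma SL_eq_SLFrom (ls : List (Finset ℕ)) : SL ls = SLFrom ∅ ls := rfl

lemma SL_cons (l : Finset ℕ) (t : List (Finset ℕ)) : SL (l :: t) = l.card + SLFrom l t := by
  simp [SL_eq_SLFrom]

lemma SL_singleton (l : Finset ℕ) : SL [l] = l.card := by
  simp [SL_cons]

lemma SL_cons_cons_sdiff (a l : Finset ℕ) (t : List (Finset ℕ)) :
    SL (a :: l :: t) = a.card + SL ((l \ a) :: t) := by
  simp [SL_cons]

/-- The disjoint sets `f₀ \ prev` and `f₁ ∩ (l \ prev)` both lie in `X₁ = l \ prev`. -/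
lemma sum_card_le_SLFrom : ∀ (ls : List (Finset ℕ)) (prev : Finset ℕ) (f : ℕ → Finset ℕ),
    (∀ i < ls.length, f i ⊆ ls.getD i ∅) →
    (∀ i, i + 1 < ls.length → Disjoint (f i) (f (i + 1))) →
    ∑ i ∈ range ls.length, (f i).card ≤ SLFrom prev ls + (f 0 ∩ prev).card
  | [], _, _, _, _ => by simp
  | [l], prev, f, hsub, _ => by
    have hf₀ : f 0 ⊆ l := hsub 0 (by simp)
    have := card_le_card (sdiff_subset_sdiff hf₀ (le_refl prev))
    have := card_sdiff_add_card_inter (f 0) prev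
    simp only [List.length_singleton, sum_range_one, SLFrom_cons, SLFrom_nil]
    omega
  | l :: l' :: t, prev, f, hsub, hdisj => by
    have hX : (f 0 \ prev).card + (f 1 ∩ (l \ prev)).card ≤ (l \ prev).card := by
      rw [← card_union_of_disjoint (disjoint_of_subset_left sdiff_subset
        (disjoint_of_subset_right inter_subset_left (hdisj 0 (by simp))))]
      exact card_le_card
        (union_subset (sdiff_subset_sdiff (hsub 0 (by simp)) le_rfl) inter_subset_right)
    have ih := sum_card_le_SLFrom (l' :: t) (l \ prev) (fun i => f (i + 1))
      (fun i hi => hsub (i + 1) (by simpa using hi))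
      (fun i hi => hdisj (i + 1) (by simpa using hi))
    have := card_sdiff_add_card_inter (f 0) prev
    rw [List.length_cons, sum_range_succ', SLFrom_cons]
    rw [zero_add] at ih
    omega

lemma PathListColorable.mul_length_le_SL {b : ℕ} {ls : List (Finset ℕ)}
    (h : PathListColorable b ls) : b * ls.length ≤ SL ls := by
  obtain ⟨f, hf, hdisj⟩ := h
  calc b * ls.length = ∑ i ∈ range ls.length, (f i).card := by
        rw [sum_congr rfl fun i hi => (hf i (mem_range.1 hi)).2]
        simp [mul_comm]
    _ ≤ SL ls := by
        simpa [SL_eq_SLFrom] using sum_card_le_SLFrom ls ∅ f (fun i hi => (hf i hi).1) hdisj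

/-- The number of sets `X_i` containing a colour whose membership in `L(v_1), …, L(v_n)` is
`z`, when the set preceding `X_1` contains it iff `p`. -/
def xCount : Bool → List Bool → ℕ
  | _, [] => 0
  | p, a :: t => (if a && !p then 1 else 0) + xCount (a && !p) t

lemma card_eq_sum_ite_mem {s U : Finset ℕ} (h : s ⊆ U) :
    s.card = ∑ c ∈ U, if c ∈ s then 1 else 0 := by
  rw [sum_boole, filter_mem_eq_inter, inter_eq_right.2 h, Nat.cast_id]

lemma SLFrom_eq_sum_xCount (U : Finset ℕ) : ∀ (ls : List (Finset ℕ)) (prev : Finset ℕ),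
    (∀ l ∈ ls, l ⊆ U) →
    SLFrom prev ls = ∑ c ∈ U, xCount (c ∈ prev) (ls.map fun l => c ∈ l)
  | [], _, _ => by simp [xCount]
  | l :: t, prev, h => by
    rw [SLFrom_cons, SLFrom_eq_sum_xCount U t _ fun l' hl' => h l' (List.mem_cons_of_mem _ hl'),
      card_eq_sum_ite_mem (sdiff_subset.trans (h l List.mem_cons_self)), ← sum_add_distrib]
    refine sum_congr rfl fun c _ => ?_
    by_cases hl : c ∈ l <;> by_cases hp : c ∈ prev <;> simp [xCount, hl, hp]

lemma SL_eq_sum_xCount {U : Finset ℕ} {ls : List (Finset ℕ)} (h : ∀ l ∈ ls, l ⊆ U) :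
    SL ls = ∑ c ∈ U, xCount false (ls.map fun l => c ∈ l) := by
  simp [SL_eq_SLFrom, SLFrom_eq_sum_xCount U ls ∅ h]

/-- A colour of `L(v_1)` lies in `X_1` and extends a run of length `r` to length `r + 1`;
this adds one to the count `⌈·/2⌉` of that run iff `r` is even. -/
lemma xCount_false_cons (a : Bool) : ∀ z : List Bool,
    xCount false (a :: z) = xCount false z + if a ∧ Even (z.takeWhile id).length then 1 else 0
  | [] => by cases a <;> simp [xCount]
  | false :: w => by cases a <;> simp [xCount, add_comm]
  | true :: w => by
    cases a
    · simp [xCount, add_comm]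
    · have ih := xCount_false_cons true w
      by_cases he : Even (w.takeWhile id).length <;>
        simp_all [xCount, Nat.even_add_one] <;> omega

def leadRun (c : ℕ) (w : List (Finset ℕ)) : ℕ := (w.takeWhile fun l => c ∈ l).length

lemma leadRun_take (c : ℕ) : ∀ (w : List (Finset ℕ)) (k : ℕ),
    leadRun c (w.take k) = min (leadRun c w) k
  | [], _ => by simp [leadRun]
  | _ :: _, 0 => by simp [leadRun]
  | l :: w, k + 1 => by
    have ih := leadRun_take c w k
    unfold leadRun at ih ⊢
    by_cases hc : c ∈ l <;> simp [hc, ih]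

lemma SL_cons_eq_card_filter_add (h : Finset ℕ) (w : List (Finset ℕ)) :
    SL (h :: w) = (h.filter fun c => Even (leadRun c w)).card + SL w := by
  set U := (h :: w).toFinset.sup id
  have hU : ∀ l ∈ h :: w, l ⊆ U := fun l hl => le_sup (f := id) (List.mem_toFinset.2 hl)
  rw [SL_eq_sum_xCount hU, SL_eq_sum_xCount fun l hl => hU l (List.mem_cons_of_mem _ hl),
    card_eq_sum_ite_mem ((filter_subset _ _).trans (hU h List.mem_cons_self)), ← sum_add_distrib]
  refine sum_congr rfl fun c _ => ?_
  rw [List.map_cons, xCount_false_cons, List.takeWhile_map, add_comm]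
  refine congrArg (· + _) (if_congr ?_ rfl rfl)
  rw [mem_filter]
  simp [leadRun]

lemma filter_even_min_total {α : Type*} (s : Finset α) (r : α → ℕ) (k k' : ℕ) :
    s.filter (fun c => Even (min (r c) k)) ⊆ s.filter (fun c => Even (min (r c) k')) ∨
      s.filter (fun c => Even (min (r c) k')) ⊆ s.filter (fun c => Even (min (r c) k)) := by
  by_contra! h
  obtain ⟨c, hc, hc'⟩ := not_subset.1 h.1
  obtain ⟨d, hd, hd'⟩ := not_subset.1 h.2
  simp only [mem_filter, Nat.even_iff, not_and] at hc hc' hd hd'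
  have := hc' hc.1
  have := hd' hd.1
  omega

lemma subset_of_subset_or_subset_of_card_le {α : Type*} {s t : Finset α} (h : s ⊆ t ∨ t ⊆ s)
    (hst : s.card ≤ t.card) : s ⊆ t :=
  h.elim id fun hts => (eq_of_subset_of_card_le hts hst).ge

/-- Take `f` between the largest member of the chain with at most `b` elements and the
smallest one with more. -/
lemma exists_subset_card_eq_min_le_card_inter {α κ : Type*} [DecidableEq α] {l : Finset α}
    {b : ℕ} (hb : b ≤ l.card) (K : Finset κ) (S : κ → Finset α) (hS : ∀ k ∈ K, S k ⊆ l)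
    (hchain : ∀ k ∈ K, ∀ k' ∈ K, S k ⊆ S k' ∨ S k' ⊆ S k) :
    ∃ f ⊆ l, f.card = b ∧ ∀ k ∈ K, min b (S k).card ≤ (f ∩ S k).card := by
  obtain ⟨T, hTl, hTb, hsmall, hbig⟩ : ∃ T ⊆ l, T.card ≤ b ∧
      (∀ k ∈ K, (S k).card ≤ b → S k ⊆ T) ∧ (∀ k ∈ K, b < (S k).card → T ⊆ S k) := by
    by_cases hne : (K.filter fun k => (S k).card ≤ b).Nonempty
    · obtain ⟨k₀, hk₀, hmax⟩ := exists_max_image _ (fun k => (S k).card) hne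
      rw [mem_filter] at hk₀
      refine ⟨S k₀, hS k₀ hk₀.1, hk₀.2, fun k hk hkb => ?_, fun k hk hkb => ?_⟩
      · exact subset_of_subset_or_subset_of_card_le (hchain k hk k₀ hk₀.1)
          (hmax k (mem_filter.2 ⟨hk, hkb⟩))
      · exact subset_of_subset_or_subset_of_card_le (hchain k₀ hk₀.1 k hk) (by omega)
    · refine ⟨∅, empty_subset _, by simp, fun k hk hkb => ?_, fun _ _ _ => empty_subset _⟩
      exact absurd ⟨k, mem_filter.2 ⟨hk, hkb⟩⟩ hne
  obtain ⟨B, hTB, hBl, hbB, hbig'⟩ : ∃ B, T ⊆ B ∧ B ⊆ l ∧ b ≤ B.card ∧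
      ∀ k ∈ K, b < (S k).card → B ⊆ S k := by
    by_cases hne : (K.filter fun k => b < (S k).card).Nonempty
    · obtain ⟨k₁, hk₁, hmin⟩ := exists_min_image _ (fun k => (S k).card) hne
      rw [mem_filter] at hk₁
      refine ⟨S k₁, hbig k₁ hk₁.1 hk₁.2, hS k₁ hk₁.1, hk₁.2.le, fun k hk hkb => ?_⟩
      exact subset_of_subset_or_subset_of_card_le (hchain k₁ hk₁.1 k hk)
        (hmin k (mem_filter.2 ⟨hk, hkb⟩))
    · refine ⟨l, hTl, subset_rfl, hb, fun k hk hkb => ?_⟩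
      exact absurd ⟨k, mem_filter.2 ⟨hk, hkb⟩⟩ hne
  obtain ⟨f, hTf, hfB, hf⟩ := exists_subsuperset_card_eq hTB hTb hbB
  refine ⟨f, hfB.trans hBl, hf, fun k hk => ?_⟩
  rcases le_or_gt (S k).card b with hkb | hkb
  · rw [inter_eq_right.2 ((hsmall k hk hkb).trans hTf)]
    exact min_le_right _ _
  · rw [inter_eq_left.2 (hfB.trans (hbig' k hk hkb)), hf]
    exact min_le_left _ _

/-- A colour of `h` counts in `S` of `h :: l₂ :: t.take k` iff its run along `l₂ :: t`, cut
at length `k + 1`, is even; these sets form a chain in `k`, so one `b`-subset `f₁` of `l₁`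
meets each of them in as many colours as possible. Deleting `f₁` from `l₂` then costs at
most what the prefix conditions can afford. -/
lemma exists_subset_forall_take (b : ℕ) (l₁ l₂ : Finset ℕ) (t : List (Finset ℕ))
    (hl₁ : b ≤ l₁.card)
    (hpre : ∀ k ≤ t.length, b * (k + 2) ≤ SL (l₁ :: l₂ :: t.take k))
    (hrest : ∀ k ≤ t.length, b * (k + 1) ≤ SL (l₂ :: t.take k)) :
    ∃ f₁ ⊆ l₁, f₁.card = b ∧ ∀ k ≤ t.length, b * (k + 1) ≤ SL ((l₂ \ f₁) :: t.take k) := by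
  set O : Finset ℕ → ℕ → Finset ℕ :=
    fun h k => h.filter fun c => Even (min (leadRun c (l₂ :: t)) (k + 1))
  have hSL : ∀ h k, SL (h :: l₂ :: t.take k) = (O h k).card + SL (l₂ :: t.take k) := by
    intro h k
    rw [SL_cons_eq_card_filter_add, show l₂ :: t.take k = (l₂ :: t).take (k + 1) from rfl]
    simp only [O, leadRun_take]
  obtain ⟨f₁, hf₁l, hf₁, hsel⟩ := exists_subset_card_eq_min_le_card_inter hl₁
    (range (t.length + 1)) (O l₁) (fun _ _ => filter_subset _ _)
    (fun k _ k' _ => filter_even_min_total _ _ _ _)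
  refine ⟨f₁, hf₁l, hf₁, fun k hk => ?_⟩
  have hOf₁ : O f₁ k = f₁ ∩ O l₁ k := by
    simp only [O, inter_filter, inter_eq_left.2 hf₁l]
  have h₁ := hSL l₁ k
  have h₂ := hSL f₁ k
  have h₃ := SL_cons_cons_sdiff f₁ l₂ (t.take k)
  have hmin := hsel k (mem_range.2 (by omega))
  have hle := card_le_card (inter_subset_right (s₁ := f₁) (s₂ := O l₁ k))
  have := hpre k hk
  have := hrest k hk
  have hmul : b * (k + 2) = b * (k + 1) + b := by ring
  rw [hOf₁] at h₂
  omega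

lemma pathListColorable_singleton {b : ℕ} {l : Finset ℕ} (h : b ≤ l.card) :
    PathListColorable b [l] := by
  obtain ⟨s, hs, hcard⟩ := exists_subset_card_eq h
  refine ⟨fun _ => s, fun i hi => ?_, fun i hi => by simp at hi⟩
  obtain rfl : i = 0 := by simpa using hi
  exact ⟨hs, hcard⟩

lemma PathListColorable.cons_of_sdiff {b : ℕ} {l₁ l₂ f₁ : Finset ℕ} {t : List (Finset ℕ)}
    (hf₁l : f₁ ⊆ l₁) (hf₁ : f₁.card = b) (h : PathListColorable b ((l₂ \ f₁) :: t)) :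
    PathListColorable b (l₁ :: l₂ :: t) := by
  obtain ⟨g, hg, hgdisj⟩ := h
  refine ⟨fun | 0 => f₁ | i + 1 => g i, fun i hi => ?_, fun i hi => ?_⟩
  · rcases i with _ | _ | i
    · exact ⟨hf₁l, hf₁⟩
    · exact ⟨(hg 0 (by simp)).1.trans sdiff_subset, (hg 0 (by simp)).2⟩
    · exact hg (i + 1) (by simpa using hi)
  · rcases i with _ | i
    · exact disjoint_of_subset_right (hg 0 (by simp)).1 disjoint_sdiff
    · exact hgdisj i (by simpa using hi)

theorem pathListColorable_of_forall_infix (b : ℕ) : ∀ (t : List (Finset ℕ)) (l : Finset ℕ),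
    (∀ s, s <:+: l :: t → b * s.length ≤ SL s) → PathListColorable b (l :: t)
  | [], l, h =>
    pathListColorable_singleton (by simpa [SL_singleton] using h [l] (List.infix_refl _))
  | l₂ :: t, l₁, h => by
    have hl₁ : b ≤ l₁.card := by
      simpa [SL_singleton] using h _ (List.take_prefix 1 _).isInfix
    obtain ⟨f₁, hf₁l, hf₁, hnew⟩ := exists_subset_forall_take b l₁ l₂ t hl₁
      (fun k hk => by simpa [hk] using h _ (List.take_prefix (k + 2) _).isInfix)
      (fun k hk => by
        simpa [hk] using h _ (List.infix_cons (List.take_prefix (k + 1) (l₂ :: t)).isInfix))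
    refine (pathListColorable_of_forall_infix b t (l₂ \ f₁) fun s hs => ?_).cons_of_sdiff hf₁l hf₁
    rcases List.infix_cons_iff.1 hs with hs | hs
    · rcases List.prefix_cons_iff.1 hs with rfl | ⟨s', rfl, hs'⟩
      · simp
      · rw [List.prefix_iff_eq_take.1 hs']
        simpa [hs'.length_le] using hnew _ hs'.length_le
    · exact h s (List.infix_cons (List.infix_cons hs))

lemma card_add_SLFrom_le_SLFrom_cons_cons (prev x y : Finset ℕ) (t : List (Finset ℕ)) :
    y.card + SLFrom (y \ (x \ prev)) t ≤ SLFrom prev (x :: y :: t) := by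
  have := card_le_card_sdiff_add_card (s := y) (t := x \ prev)
  simp only [SLFrom_cons]
  omega

lemma mul_half_le_SLFrom (c : ℕ) : ∀ (w : List (Finset ℕ)) (prev : Finset ℕ),
    (∀ l ∈ w, c ≤ l.card) → c * (w.length / 2) ≤ SLFrom prev w
  | [], _, _ => by simp
  | [_], _, _ => by simp
  | x :: y :: t, prev, h => by
    have ih := mul_half_le_SLFrom c t (y \ (x \ prev)) fun l hl => h l (by simp [hl])
    have hy := h y (by simp)
    have := card_add_SLFrom_le_SLFrom_cons_cons prev x y t
    rw [show (x :: y :: t).length / 2 = t.length / 2 + 1 by simp; omega, mul_add_one]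
    omega

lemma mul_length_le_SLFrom_append_singleton {b : ℕ} {y : Finset ℕ} (hy : b ≤ y.card) :
    ∀ (w : List (Finset ℕ)) (prev : Finset ℕ),
      (∀ l ∈ w, 2 * b ≤ l.card) → b * w.length ≤ SLFrom prev (w ++ [y])
  | [], _, _ => by simp
  | [x], prev, _ => by
    have := card_add_SLFrom_le_SLFrom_cons_cons prev x y []
    simp only [List.cons_append, List.nil_append, List.length_singleton] at this ⊢
    omega
  | x :: z :: t, prev, h => by
    have ih := mul_length_le_SLFrom_append_singleton hy t (z \ (x \ prev))
      fun l hl => h l (by simp [hl])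
    have hz := h z (by simp)
    have := card_add_SLFrom_le_SLFrom_cons_cons prev x z (t ++ [y])
    simp only [List.cons_append, List.length_cons] at this ⊢
    rw [show b * (t.length + 1 + 1) = b * t.length + 2 * b by ring]
    omega

lemma mul_length_le_SL_cons {b : ℕ} {x : Finset ℕ} {w : List (Finset ℕ)} (hx : b ≤ x.card)
    (hw : ∀ l ∈ w, 2 * b ≤ l.card) : b * (w.length + 1) ≤ SL (x :: w) := by
  obtain ⟨k, hk | hk⟩ := Nat.even_or_odd' w.length
  · have := mul_half_le_SLFrom (2 * b) w x hw
    rw [SL_cons, hk, show b * (2 * k + 1) = 2 * b * k + b by ring]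
    rw [hk, show 2 * k / 2 = k by omega] at this
    omega
  · obtain ⟨y, w, rfl⟩ : ∃ y w', w = y :: w' := List.exists_cons_of_length_pos (by omega)
    have := card_add_SLFrom_le_SLFrom_cons_cons ∅ x y w
    have := mul_half_le_SLFrom (2 * b) w (y \ (x \ ∅)) fun l hl => hw l (by simp [hl])
    have hy := hw y (by simp)
    simp only [List.length_cons] at hk ⊢
    rw [SL_eq_SLFrom, hk, show b * (2 * k + 1 + 1) = 2 * b * k + 2 * b by ring]
    rw [show w.length / 2 = k by omega] at this
    omega

lemma mul_length_le_SL_append_singleton {b : ℕ} {y : Finset ℕ} {w : List (Finset ℕ)}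
    (hy : b ≤ y.card) (hw : ∀ l ∈ w, 2 * b ≤ l.card) : b * (w.length + 1) ≤ SL (w ++ [y]) := by
  rcases w with _ | ⟨x, w⟩
  · simpa [SL_singleton] using hy
  · have := mul_length_le_SLFrom_append_singleton hy w x fun l hl => hw l (by simp [hl])
    have hx := hw x (by simp)
    rw [List.cons_append, SL_cons, List.length_cons,
      show b * (w.length + 1 + 1) = b * w.length + 2 * b by ring]
    omega

lemma mul_length_le_SL {b : ℕ} {w : List (Finset ℕ)} (hw : ∀ l ∈ w, 2 * b ≤ l.card) :
    b * w.length ≤ SL w := by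
  rcases w with _ | ⟨x, w⟩
  · simp
  · exact mul_length_le_SL_cons (le_trans (by omega) (hw x (by simp)))
      fun l hl => hw l (by simp [hl])

lemma List.infix_append_singleton_cases {α : Type*} {s w : List α} {y : α}
    (h : s <:+: w ++ [y]) : s <:+: w ∨ ∃ s', s' <:+: w ∧ s = s' ++ [y] := by
  rw [← List.reverse_infix, List.reverse_append, List.reverse_singleton,
    List.singleton_append] at h
  rcases List.infix_cons_iff.1 h with h | h
  · rcases List.prefix_cons_iff.1 h with h | ⟨s', hs, hs'⟩
    · left
      rw [List.reverse_eq_nil_iff.1 h]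
      exact List.nil_infix
    · refine Or.inr ⟨s'.reverse, List.reverse_infix.1 (by simpa using hs'.isInfix), ?_⟩
      rw [← List.reverse_reverse s, hs, List.reverse_cons]
  · exact Or.inl (List.reverse_infix.1 h)

/-- Only the whole path needs the bound: a proper subpath misses an end, and the inner lists
have `2b` colours. -/
theorem pathListColorable_cons_append_singleton {b : ℕ} {x y : Finset ℕ}
    {mid : List (Finset ℕ)} (hx : b ≤ x.card) (hy : b ≤ y.card)
    (hmid : ∀ l ∈ mid, 2 * b ≤ l.card) (h : b * (mid.length + 2) ≤ SL (x :: (mid ++ [y]))) :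
    PathListColorable b (x :: (mid ++ [y])) := by
  refine pathListColorable_of_forall_infix b _ x fun s hs => ?_
  have hmid' : ∀ s', s' <:+: mid → ∀ l ∈ s', 2 * b ≤ l.card :=
    fun s' hs' l hl => hmid l (hs'.subset hl)
  rcases List.infix_cons_iff.1 hs with hs | hs
  · rw [← List.cons_append, List.prefix_concat_iff] at hs
    rcases hs with rfl | hs
    · simpa using h
    · rcases List.prefix_cons_iff.1 hs with rfl | ⟨s', rfl, hs'⟩
      · simp
      · exact mul_length_le_SL_cons hx (hmid' s' hs'.isInfix)
  · rcases List.infix_append_singleton_cases hs with hs | ⟨s', hs', rfl⟩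
    · exact mul_length_le_SL (hmid' s hs)
    · simpa using mul_length_le_SL_append_singleton hy (hmid' s' hs')

@[simp] lemma length_delEnds (p q : Finset ℕ) (ls : List (Finset ℕ)) :
    (delEnds p q ls).length = ls.length := by
  simp [delEnds]

lemma getD_delEnds (p q : Finset ℕ) (ls : List (Finset ℕ)) {a : ℕ} (ha : a < ls.length) :
    (delEnds p q ls).getD a ∅ =
      (ls.getD a ∅ \ if a = 0 then p else ∅) \ if a = ls.length - 1 then q else ∅ := by
  rw [delEnds, List.getD_eq_getElem?_getD, List.getElem?_reverse (by simpa),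
    List.getElem?_modifyHead, List.getElem?_reverse (by simp; omega), List.getElem?_modifyHead,
    List.getD_eq_getElem?_getD]
  simp only [List.length_reverse, List.length_modifyHead]
  rw [show ls.length - 1 - (ls.length - 1 - a) = a by omega]
  rw [List.getElem?_eq_getElem ha]
  split_ifs <;> first | omega | simp [*]

lemma pathListColorable_delEnds_iff {b n : ℕ} {L' : ℕ → Finset ℕ} {p q : Finset ℕ} (hn : 0 < n) :
    PathListColorable b (delEnds p q ((List.range n).map L')) ↔
      ∃ g : ℕ → Finset ℕ, (∀ a < n, g a ⊆ L' a ∧ (g a).card = b) ∧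
        (∀ a, a + 1 < n → Disjoint (g a) (g (a + 1))) ∧
        Disjoint (g 0) p ∧ Disjoint (g (n - 1)) q := by
  have hget : ∀ a < n, (delEnds p q ((List.range n).map L')).getD a ∅ =
      (L' a \ if a = 0 then p else ∅) \ if a = n - 1 then q else ∅ := fun a ha => by
    rw [getD_delEnds _ _ _ (by simpa), List.getD_eq_getElem?_getD]
    simp [ha]
  simp only [PathListColorable, length_delEnds, List.length_map, List.length_range]
  constructor
  · rintro ⟨g, hg, hdisj⟩
    refine ⟨g, fun a ha => ⟨(hg a ha).1.trans ?_, (hg a ha).2⟩, hdisj, ?_, ?_⟩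
    · rw [hget a ha]
      exact sdiff_subset.trans sdiff_subset
    · have := (hg 0 hn).1
      rw [hget 0 hn, if_pos rfl] at this
      exact (subset_sdiff.1 (this.trans sdiff_subset)).2
    · have := (hg (n - 1) (by omega)).1
      rw [hget (n - 1) (by omega), if_pos rfl] at this
      exact (subset_sdiff.1 this).2
  · rintro ⟨g, hg, hdisj, h0, hlast⟩
    refine ⟨g, fun a ha => ⟨?_, (hg a ha).2⟩, hdisj⟩
    rw [hget a ha, subset_sdiff, subset_sdiff]
    refine ⟨⟨(hg a ha).1, ?_⟩, ?_⟩ <;> split_ifs with h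
    all_goals first | exact disjoint_empty_right _ | subst h; assumption

lemma delEnds_singleton (p q x : Finset ℕ) : delEnds p q [x] = [(x \ p) \ q] := by
  simp [delEnds]

lemma delEnds_cons_append_singleton (p q x y : Finset ℕ) (mid : List (Finset ℕ)) :
    delEnds p q (x :: (mid ++ [y])) = (x \ p) :: (mid ++ [y \ q]) := by
  simp [delEnds, List.reverse_append]

lemma List.map_range_add_two {α : Type*} (f : ℕ → α) (k : ℕ) :
    (List.range (k + 2)).map f =
      f 0 :: ((List.range k).map (fun a => f (a + 1)) ++ [f (k + 1)]) := by
  rw [List.range_succ, List.range_succ_eq_map]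
  simp [Function.comp_def]

theorem pathListColorable_delEnds {b n : ℕ} (hn : 0 < n) {L' : ℕ → Finset ℕ} {p q : Finset ℕ}
    (hcard : ∀ a < n, (L' a).card = 2 * b) (hp : (L' 0 ∩ p).card ≤ b)
    (hq : (L' (n - 1) ∩ q).card ≤ b) (hSL : b * n ≤ SL (delEnds p q ((List.range n).map L'))) :
    PathListColorable b (delEnds p q ((List.range n).map L')) := by
  obtain ⟨k, rfl | rfl⟩ : ∃ k, n = 1 ∨ n = k + 2 := ⟨n - 2, by omega⟩
  · rw [show (List.range 1).map L' = [L' 0] from rfl, delEnds_singleton] at hSL ⊢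
    exact pathListColorable_singleton (by simpa [SL_singleton] using hSL)
  · have hend : ∀ a < k + 2, ∀ s, (L' a ∩ s).card ≤ b → b ≤ (L' a \ s).card := fun a ha s hs => by
      have := card_sdiff_add_card_inter (L' a) s
      have := hcard a ha
      omega
    rw [List.map_range_add_two, delEnds_cons_append_singleton] at hSL ⊢
    refine pathListColorable_cons_append_singleton (hend 0 (by omega) p hp)
      (hend (k + 1) (by omega) q (by simpa using hq)) ?_ (by simpa using hSL)
    simp only [List.mem_map, List.mem_range]
    rintro _ ⟨a, ha, rfl⟩
    rw [hcard _ (by omega)]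

lemma damZ_le_sub_iff (ls : List (Finset ℕ)) (p q : Finset ℕ) (k : ℤ) :
    damZ ls p q ≤ SL ls - k ↔ k ≤ SL (delEnds p q ls) := by
  unfold damZ
  omega

lemma card_inter_add_card_le {α : Type*} [DecidableEq α] {s l t : Finset α} (hs : s ⊆ l)
    (hst : Disjoint s t) : (l ∩ t).card + s.card ≤ l.card := by
  rw [← card_union_of_disjoint (disjoint_of_subset_left inter_subset_right hst.symm)]
  exact card_le_card (union_subset inter_subset_left hs)

section Graph

variable {V : Type*} {G : SimpleGraph V} {X : Finset V}

lemma disjoint_phiNX {f : V → Finset ℕ} (hf : ∀ ⦃u v⦄, G.Adj u v → Disjoint (f u) (f v))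
    (w : V) : Disjoint (f w) (phiNX G X f w) := by
  classical
  rw [phiNX, disjoint_biUnion_right]
  exact fun x hx => hf (mem_filter.1 hx).2

lemma subset_phiNX {φ : V → Finset ℕ} {w x : V} (hx : x ∈ X) (hadj : G.Adj w x) :
    φ x ⊆ phiNX G X φ w := by
  classical
  exact subset_biUnion_of_mem φ (mem_filter.2 ⟨hx, hadj⟩)

variable {ι : Type*} {n : ι → ℕ} {pa : ι → ℕ → V}

open Classical in
noncomputable def pathGlue (n : ι → ℕ) (pa : ι → ℕ → V) (φ : V → Finset ℕ)
    (g : ι → ℕ → Finset ℕ) (v : V) : Finset ℕ :=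
  if h : ∃ p : ι × ℕ, p.2 < n p.1 ∧ pa p.1 p.2 = v then g h.choose.1 h.choose.2 else φ v

lemma pathGlue_apply_pa (hinj : ∀ i, ∀ a < n i, ∀ b < n i, pa i a = pa i b → a = b)
    (hdisj : ∀ i j, i ≠ j → ∀ a < n i, ∀ b < n j, pa i a ≠ pa j b)
    (φ : V → Finset ℕ) (g : ι → ℕ → Finset ℕ) {i : ι} {a : ℕ} (ha : a < n i) :
    pathGlue n pa φ g (pa i a) = g i a := by
  have h : ∃ p : ι × ℕ, p.2 < n p.1 ∧ pa p.1 p.2 = pa i a := ⟨(i, a), ha, rfl⟩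
  rw [pathGlue, dif_pos h]
  obtain ⟨hlt, heq⟩ := h.choose_spec
  generalize h.choose = p at hlt heq ⊢
  obtain ⟨j, c⟩ := p
  obtain rfl : j = i := by
    by_contra hne
    exact hdisj _ _ hne _ hlt _ ha heq
  rw [hinj j c hlt a ha heq]

lemma pathGlue_of_mem (hnotX : ∀ i, ∀ a < n i, pa i a ∉ X) (φ : V → Finset ℕ)
    (g : ι → ℕ → Finset ℕ) {v : V} (hv : v ∈ X) : pathGlue n pa φ g v = φ v := by
  rw [pathGlue, dif_neg]
  rintro ⟨p, hp, rfl⟩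
  exact hnotX _ _ hp hv

theorem listColorable_of_pathColorings
    (hinj : ∀ i, ∀ a < n i, ∀ b < n i, pa i a = pa i b → a = b)
    (hdisj : ∀ i j, i ≠ j → ∀ a < n i, ∀ b < n j, pa i a ≠ pa j b)
    (hnotX : ∀ i, ∀ a < n i, pa i a ∉ X)
    (hcover : ∀ v : V, v ∉ X → ∃ i, ∃ a < n i, pa i a = v)
    (hpathadj : ∀ i, ∀ a < n i, ∀ b < n i, G.Adj (pa i a) (pa i b) → a + 1 = b ∨ b + 1 = a)
    (hnoadj : ∀ i j, i ≠ j → ∀ a < n i, ∀ b < n j, ¬ G.Adj (pa i a) (pa j b))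
    (hinternal : ∀ i, ∀ a, 0 < a → a + 1 < n i → ∀ x ∈ X, ¬ G.Adj (pa i a) x)
    {L : V → Finset ℕ} {b : ℕ} {φ : V → Finset ℕ} (hφL : ∀ x ∈ X, φ x ⊆ L x)
    (hφcard : ∀ x ∈ X, (φ x).card = b)
    (hφadj : ∀ x ∈ X, ∀ y ∈ X, G.Adj x y → Disjoint (φ x) (φ y))
    {g : ι → ℕ → Finset ℕ} (hgL : ∀ i, ∀ a < n i, g i a ⊆ L (pa i a) ∧ (g i a).card = b)
    (hgadj : ∀ i a, a + 1 < n i → Disjoint (g i a) (g i (a + 1)))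
    (hg0 : ∀ i, Disjoint (g i 0) (phiNX G X φ (pa i 0)))
    (hglast : ∀ i, Disjoint (g i (n i - 1)) (phiNX G X φ (pa i (n i - 1)))) :
    ListColorable G L b := by
  have hFX : ∀ x ∈ X, pathGlue n pa φ g x = φ x := fun x hx => pathGlue_of_mem hnotX φ g hx
  have hFpa : ∀ i, ∀ a < n i, pathGlue n pa φ g (pa i a) = g i a :=
    fun i a ha => pathGlue_apply_pa hinj hdisj φ g ha
  have hvert : ∀ v, v ∈ X ∨ ∃ i, ∃ a < n i, pa i a = v :=
    fun v => (em (v ∈ X)).imp_right (hcover v)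
  have hmixed : ∀ x ∈ X, ∀ i, ∀ a < n i, G.Adj x (pa i a) → Disjoint (φ x) (g i a) := by
    intro x hx i a ha hadj
    rcases Nat.eq_zero_or_pos a with rfl | ha0
    · exact disjoint_of_subset_left (subset_phiNX hx hadj.symm) (hg0 i).symm
    · obtain rfl : a = n i - 1 := by
        by_contra hne
        exact hinternal i a ha0 (by omega) x hx hadj.symm
      exact disjoint_of_subset_left (subset_phiNX hx hadj.symm) (hglast i).symm
  refine ⟨pathGlue n pa φ g, fun v => ?_, fun v => ?_, fun u v huv => ?_⟩
  · rcases hvert v with hv | ⟨i, a, ha, rfl⟩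
    · exact hFX v hv ▸ hφL v hv
    · exact hFpa i a ha ▸ (hgL i a ha).1
  · rcases hvert v with hv | ⟨i, a, ha, rfl⟩
    · exact hFX v hv ▸ hφcard v hv
    · exact hFpa i a ha ▸ (hgL i a ha).2
  · rcases hvert u with hu | ⟨i, a, ha, rfl⟩ <;> rcases hvert v with hv | ⟨j, c, hc, rfl⟩
    · rw [hFX u hu, hFX v hv]
      exact hφadj u hu v hv huv
    · rw [hFX u hu, hFpa j c hc]
      exact hmixed u hu j c hc huv
    · rw [hFpa i a ha, hFX v hv]
      exact (hmixed v hv i a ha huv.symm).symm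
    · obtain rfl : i = j := by
        by_contra hne
        exact hnoadj i j hne a ha c hc huv
      rw [hFpa i a ha, hFpa i c hc]
      rcases hpathadj i a ha c hc huv with rfl | rfl
      · exact hgadj i a hc
      · exact (hgadj i c ha).symm

end Graph

theorem abstract_extension_general (m : ℕ)
    (V : Type) (G : SimpleGraph V) (X : Finset V)
    (ι : Type) (n : ι → ℕ) (hodd : ∀ i, Odd (n i))
    (pa : ι → ℕ → V)
    (hinj : ∀ i, ∀ a < n i, ∀ b < n i, pa i a = pa i b → a = b)
    (hdisj : ∀ i j, i ≠ j → ∀ a < n i, ∀ b < n j, pa i a ≠ pa j b)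
    (hnotX : ∀ i, ∀ a < n i, pa i a ∉ X)
    (hcover : ∀ v : V, v ∉ X → ∃ i, ∃ a < n i, pa i a = v)
    (hpathadj : ∀ i, ∀ a < n i, ∀ b < n i,
      (G.Adj (pa i a) (pa i b) ↔ a + 1 = b ∨ b + 1 = a))
    (hnoadj : ∀ i j, i ≠ j → ∀ a < n i, ∀ b < n j, ¬ G.Adj (pa i a) (pa j b))
    (hinternal : ∀ i, ∀ a, 0 < a → a + 1 < n i → ∀ x ∈ X, ¬ G.Adj (pa i a) x)
    (L : V → Finset ℕ) (hL : ∀ v, v ∉ X → (L v).card = 4 * m) :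
    ListColorable G L (2 * m) ↔
      ∃ φ : V → Finset ℕ,
        (∀ x ∈ X, φ x ⊆ L x) ∧ (∀ x ∈ X, (φ x).card = 2 * m) ∧
        (∀ x ∈ X, ∀ y ∈ X, G.Adj x y → Disjoint (φ x) (φ y)) ∧
        ∀ i : ι,
          (L (pa i 0) ∩ phiNX G X φ (pa i 0)).card ≤ 2 * m ∧
          (L (pa i (n i - 1)) ∩ phiNX G X φ (pa i (n i - 1))).card ≤ 2 * m ∧
          damZ ((List.range (n i)).map fun a => L (pa i a))
              (phiNX G X φ (pa i 0)) (phiNX G X φ (pa i (n i - 1)))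
            ≤ (SL ((List.range (n i)).map fun a => L (pa i a)) : ℤ)
              - 2 * m * n i := by
  constructor
  · rintro ⟨f, hfL, hfcard, hfadj⟩
    refine ⟨f, fun x _ => hfL x, fun x _ => hfcard x, fun x _ y _ h => hfadj h, fun i => ?_⟩
    have hn := (hodd i).pos
    have hend : ∀ w ∉ X, (L w ∩ phiNX G X f w).card ≤ 2 * m := fun w hw => by
      have := card_inter_add_card_le (hfL w) (disjoint_phiNX (X := X) hfadj w)
      rw [hfcard, hL w hw] at this
      omega
    refine ⟨hend _ (hnotX i 0 hn), hend _ (hnotX i _ (by omega)), ?_⟩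
    have hcol := (pathListColorable_delEnds_iff hn).2 ⟨fun a => f (pa i a),
      fun a _ => ⟨hfL _, hfcard _⟩,
      fun a ha => hfadj ((hpathadj i a (by omega) (a + 1) ha).2 (Or.inl rfl)),
      disjoint_phiNX (X := X) hfadj _, disjoint_phiNX (X := X) hfadj _⟩
    rw [damZ_le_sub_iff]
    exact_mod_cast (by simpa using hcol.mul_length_le_SL)
  · rintro ⟨φ, hφL, hφcard, hφadj, hcond⟩
    have hpath i := by
      obtain ⟨hp, hq, hdam⟩ := hcond i
      rw [damZ_le_sub_iff] at hdam
      exact (pathListColorable_delEnds_iff (hodd i).pos).1 <| pathListColorable_delEnds (b := 2 * m)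
        (hodd i).pos (fun a ha => by rw [hL _ (hnotX i a ha)]; ring) hp hq (by exact_mod_cast hdam)
    choose g hgL hgadj hg0 hglast using hpath
    exact listColorable_of_pathColorings hinj hdisj hnotX hcover
      (fun i a ha c hc => (hpathadj i a ha c hc).1) hnoadj hinternal hφL hφcard hφadj
      hgL hgadj hg0 hglast

/-- Lemma `lem:abstract`: let `X` be a set of vertices of `G` such that every component
of `G − X` is a path with an odd number of vertices (the components are given by the
vertex enumerations `pa i 0, …, pa i (n i − 1)`), none of whose internal vertices has a
neighbour in `X`, and let `L` give `4m` colours to every vertex outside `X`. Then `G`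
is `(L:2m)`-colourable iff `G[X]` has a `2m`-tuple `L`-colouring `φ` such that every
component path satisfies conditions (i), (ii), (iii). -/
theorem abstract_extension (m : ℕ) (hm : 0 < m)
    (V : Type) (G : SimpleGraph V) (X : Finset V)
    (ι : Type) (n : ι → ℕ) (hodd : ∀ i, Odd (n i))
    (pa : ι → ℕ → V)
    (hinj : ∀ i, ∀ a < n i, ∀ b < n i, pa i a = pa i b → a = b)
    (hdisj : ∀ i j, i ≠ j → ∀ a < n i, ∀ b < n j, pa i a ≠ pa j b)
    (hnotX : ∀ i, ∀ a < n i, pa i a ∉ X)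
    (hcover : ∀ v : V, v ∉ X → ∃ i, ∃ a < n i, pa i a = v)
    (hpathadj : ∀ i, ∀ a < n i, ∀ b < n i,
      (G.Adj (pa i a) (pa i b) ↔ a + 1 = b ∨ b + 1 = a))
    (hnoadj : ∀ i j, i ≠ j → ∀ a < n i, ∀ b < n j, ¬ G.Adj (pa i a) (pa j b))
    (hinternal : ∀ i, ∀ a, 0 < a → a + 1 < n i → ∀ x ∈ X, ¬ G.Adj (pa i a) x)
    (L : V → Finset ℕ) (hL : ∀ v, v ∉ X → (L v).card = 4 * m) :
    ListColorable G L (2 * m) ↔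
      ∃ φ : V → Finset ℕ,
        (∀ x ∈ X, φ x ⊆ L x) ∧ (∀ x ∈ X, (φ x).card = 2 * m) ∧
        (∀ x ∈ X, ∀ y ∈ X, G.Adj x y → Disjoint (φ x) (φ y)) ∧
        ∀ i : ι,
          (L (pa i 0) ∩ phiNX G X φ (pa i 0)).card ≤ 2 * m ∧
          (L (pa i (n i - 1)) ∩ phiNX G X φ (pa i (n i - 1))).card ≤ 2 * m ∧
          damZ ((List.range (n i)).map fun a => L (pa i a))
              (phiNX G X φ (pa i 0)) (phiNX G X φ (pa i (n i - 1)))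
            ≤ (SL ((List.range (n i)).map fun a => L (pa i a)) : ℤ)
              - 2 * m * n i :=
  abstract_extension_general m V G X ι n hodd pa hinj hdisj hnotX hcover hpathadj hnoadj hinternal L
    hL
end

section
/- Let m be a positive integer and let L be a list assignment on a path P with an odd number n of vertices v_1, …, v_n such that |L(v_i)| = 4m for all i. Then S_L(P) ≥ 2nm − 2m + |X̂_1| + |X̂_n| + |A|. -/
lemma Xseq_length (prev : Finset ℕ) (ls : List (Finset ℕ)) :
    (Xseq prev ls).length = ls.length := by
  induction ls generalizing prev <;> simp [Xseq, *]

lemma Xseq_append (prev : Finset ℕ) (l₁ l₂ : List (Finset ℕ)) :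
    Xseq prev (l₁ ++ l₂) = Xseq prev l₁ ++ Xseq ((Xseq prev l₁).getLastD prev) l₂ := by
  induction l₁ generalizing prev with
  | nil => simp [Xseq]
  | cons a t ih => simp only [List.cons_append, Xseq, ih, List.getLastD_cons]

lemma Xat_length_sub_one (ls : List (Finset ℕ)) :
    Xat ls (ls.length - 1) = (Xseq ∅ ls).getLastD ∅ := by
  simp [Xat, List.getD_eq_getElem?_getD, List.getLast?_eq_getElem?, Xseq_length]

lemma Xseq_append_pair (ls : List (Finset ℕ)) (b c : Finset ℕ) :
    Xseq ∅ (ls ++ [b, c]) = Xseq ∅ ls ++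
      [b \ Xat ls (ls.length - 1), c \ (b \ Xat ls (ls.length - 1))] := by
  rw [Xseq_append, Xat_length_sub_one]
  rfl

lemma SL_append_pair (ls : List (Finset ℕ)) (b c : Finset ℕ) :
    SL (ls ++ [b, c]) = SL ls + (b \ Xat ls (ls.length - 1)).card
      + (c \ (b \ Xat ls (ls.length - 1))).card := by
  simp [SL, Xseq_append_pair, add_assoc]

lemma Xat_append_pair_last (ls : List (Finset ℕ)) (b c : Finset ℕ) :
    Xat (ls ++ [b, c]) ((ls ++ [b, c]).length - 1) = c \ (b \ Xat ls (ls.length - 1)) := by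
  rw [Xat_length_sub_one, Xseq_append_pair]
  simp

lemma mem_foldl_inter {α : Type*} [DecidableEq α] (a : Finset α) (rest : List (Finset α))
    (x : α) :
    x ∈ rest.foldl (· ∩ ·) a ↔ x ∈ a ∧ ∀ l ∈ rest, x ∈ l := by
  induction rest generalizing a <;> simp [*, and_assoc]

lemma mem_Aset {ls : List (Finset ℕ)} (h : ls ≠ []) {x : ℕ} :
    x ∈ Aset ls ↔ ∀ i < ls.length, x ∈ ls.getD i ∅ := by
  obtain ⟨a, t, rfl⟩ := List.exists_cons_of_ne_nil h
  rw [Aset, mem_foldl_inter, ← List.forall_mem_cons (p := (x ∈ ·)), List.forall_mem_iff_getElem]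
  exact forall₂_congr fun i hi => by rw [List.getD_eq_getElem _ _ hi]

lemma Aset_append_pair {ls : List (Finset ℕ)} (h : ls ≠ []) (b c : Finset ℕ) :
    Aset (ls ++ [b, c]) = Aset ls ∩ b ∩ c := by
  obtain ⟨a, t, rfl⟩ := List.exists_cons_of_ne_nil h
  simp [Aset, List.foldl_append]

lemma firstMissing_eq {ls : List (Finset ℕ)} {x k : ℕ} (hk : k < ls.length)
    (hxk : x ∉ ls.getD k ∅) (hbefore : ∀ j < k, x ∈ ls.getD j ∅) :
    firstMissing ls x = k :=
  le_antisymm (Nat.sInf_le ⟨hk, hxk⟩) <| not_lt.mp fun hlt =>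
    (Nat.sInf_mem (s := {i | i < ls.length ∧ x ∉ ls.getD i ∅}) ⟨k, hk, hxk⟩).2 (hbefore _ hlt)

lemma firstMissing_spec {ls : List (Finset ℕ)} (h : ls ≠ []) {x : ℕ} (hx : x ∉ Aset ls) :
    firstMissing ls x < ls.length ∧ x ∉ ls.getD (firstMissing ls x) ∅ ∧
      ∀ j < firstMissing ls x, x ∈ ls.getD j ∅ := by
  rw [mem_Aset h] at hx
  push Not at hx
  have hmem := Nat.sInf_mem hx
  refine ⟨hmem.1, hmem.2, fun j hj => ?_⟩
  by_contra hxj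
  exact Nat.notMem_of_lt_sInf hj ⟨hj.trans hmem.1, hxj⟩

lemma firstMissing_append {ls : List (Finset ℕ)} (h : ls ≠ []) (l₂ : List (Finset ℕ))
    {x : ℕ} (hx : x ∉ Aset ls) :
    firstMissing (ls ++ l₂) x = firstMissing ls x := by
  obtain ⟨hlt, hxk, hbefore⟩ := firstMissing_spec h hx
  refine firstMissing_eq (by simp; omega) (by rwa [List.getD_append _ _ _ _ hlt]) ?_
  intro j hj
  rw [List.getD_append _ _ _ _ (hj.trans hlt)]
  exact hbefore j hj

lemma hatX1_append_pair {ls : List (Finset ℕ)} (hodd : Odd ls.length) (b c : Finset ℕ) :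
    hatX1 (ls ++ [b, c]) = hatX1 ls ∪ (Aset ls \ b) := by
  have h : ls ≠ [] := List.ne_nil_of_length_pos hodd.pos
  ext x
  simp only [hatX1, Finset.mem_union, Finset.mem_filter, Finset.mem_sdiff,
    Aset_append_pair h, List.getD_append _ _ _ _ hodd.pos, Finset.mem_inter]
  by_cases hA : x ∈ Aset ls
  · have hbefore : ∀ j < ls.length, x ∈ (ls ++ [b, c]).getD j ∅ := fun j hj => by
      rw [List.getD_append _ _ _ _ hj]
      exact (mem_Aset h).mp hA j hj
    by_cases hb : x ∈ b
    · by_cases hc : x ∈ c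
      · simp [hA, hb, hc]
      · have hfm : firstMissing (ls ++ [b, c]) x = ls.length + 1 :=
          firstMissing_eq (by simp) (by simp [hc]) fun j hj => by
            rcases Nat.lt_succ_iff_lt_or_eq.mp hj with hj | rfl
            · exact hbefore j hj
            · simpa using hb
        simp [hA, hb, hc, hfm, Nat.odd_add_one, hodd]
    · have hfm : firstMissing (ls ++ [b, c]) x = ls.length :=
        firstMissing_eq (by simp) (by simp [hb]) hbefore
      simpa [hA, hb, hfm, hodd] using (mem_Aset h).mp hA 0 hodd.pos
  · simp [hA, firstMissing_append h _ hA]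

lemma card_hatX1_append_pair {ls : List (Finset ℕ)} (hodd : Odd ls.length)
    (b c : Finset ℕ) :
    (hatX1 (ls ++ [b, c])).card = (hatX1 ls).card + (Aset ls \ b).card := by
  rw [hatX1_append_pair hodd, Finset.card_union_of_disjoint]
  exact Finset.disjoint_left.mpr fun x hx hx' =>
    (Finset.mem_sdiff.mp (Finset.mem_filter.mp hx).1).2 (Finset.mem_sdiff.mp hx').1

lemma hatXn_append_pair {ls : List (Finset ℕ)} (h : ls ≠ []) (b c : Finset ℕ) :
    hatXn (ls ++ [b, c]) = (c \ (b \ Xat ls (ls.length - 1))) \ (Aset ls ∩ b ∩ c) := by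
  rw [hatXn, Aset_append_pair h, Xat_append_pair_last]

/-- The inequality holds colour by colour. -/
lemma card_extend_le (A X b c : Finset ℕ) :
    b.card + (A \ b).card + ((c \ (b \ X)) \ (A ∩ b ∩ c)).card + (A ∩ b ∩ c).card
      ≤ (b \ X).card + (c \ (b \ X)).card + (X \ A).card + A.card := by
  set U := A ∪ X ∪ b ∪ c
  have h (s : Finset ℕ) (hs : s ⊆ U) := Finset.card_eq_sum_ite hs
  rw [h b, h (A \ b), h ((c \ (b \ X)) \ (A ∩ b ∩ c)), h (A ∩ b ∩ c), h (b \ X),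
    h (c \ (b \ X)), h (X \ A), h A]
  · simp only [← Finset.sum_add_distrib]
    refine Finset.sum_le_sum fun x _ => ?_
    by_cases x ∈ A <;> by_cases x ∈ X <;> by_cases x ∈ b <;> by_cases x ∈ c <;> simp [*]
  all_goals intro x; simp only [U, Finset.mem_union, Finset.mem_sdiff, Finset.mem_inter]; tauto

lemma le_SL_append_pair {ls : List (Finset ℕ)} (hodd : Odd ls.length) {k m : ℕ}
    {b c : Finset ℕ} (hb : b.card = 4 * m)
    (ih : 4 * k * m + (hatX1 ls).card + (hatXn ls).card + (Aset ls).card ≤ SL ls) :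
    4 * (k + 1) * m + (hatX1 (ls ++ [b, c])).card + (hatXn (ls ++ [b, c])).card
      + (Aset (ls ++ [b, c])).card ≤ SL (ls ++ [b, c]) := by
  have h : ls ≠ [] := List.ne_nil_of_length_pos hodd.pos
  rw [card_hatX1_append_pair hodd, hatXn_append_pair h, Aset_append_pair h, SL_append_pair]
  have key := card_extend_le (Aset ls) (Xat ls (ls.length - 1)) b c
  rw [hatXn] at ih
  rw [hb] at key
  have : 4 * (k + 1) * m = 4 * k * m + 4 * m := by ring
  omega

lemma le_SL_of_length_eq (m k : ℕ) (ls : List (Finset ℕ)) (hlen : ls.length = 2 * k + 1)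
    (hcard : ∀ i, i < ls.length → (ls.getD i ∅).card = 4 * m) :
    4 * k * m + (hatX1 ls).card + (hatXn ls).card + (Aset ls).card ≤ SL ls := by
  induction k generalizing ls with
  | zero =>
    obtain ⟨a, rfl⟩ := List.length_eq_one_iff.mp hlen
    simp [hatX1, hatXn, Aset, SL, Xat, Xseq]
  | succ k ih =>
    obtain ⟨b, c, hbc⟩ : ∃ b c, ls.drop (2 * k + 1) = [b, c] :=
      List.length_eq_two.mp (by rw [List.length_drop, hlen]; omega)
    rw [← List.take_append_drop (2 * k + 1) ls, hbc] at hlen hcard ⊢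
    set l₀ := ls.take (2 * k + 1)
    have hl₀ : l₀.length = 2 * k + 1 := by simp at hlen; omega
    have hb : b.card = 4 * m := by
      simpa [List.getD_append_right, hl₀] using hcard l₀.length (by simp)
    refine le_SL_append_pair (hl₀ ▸ odd_two_mul_add_one k) hb (ih l₀ hl₀ fun i hi => ?_)
    rw [← List.getD_append _ [b, c] _ _ hi]
    exact hcard i (by simp; omega)

theorem SL_ge_hatsum_general (m : ℕ) (ls : List (Finset ℕ))
    (hodd : Odd ls.length)
    (hcard : ∀ i, i < ls.length → (ls.getD i ∅).card = 4 * m) :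
    2 * ls.length * m - 2 * m + (hatX1 ls).card + (hatXn ls).card + (Aset ls).card
      ≤ SL ls := by
  obtain ⟨k, hk⟩ := hodd
  have h := le_SL_of_length_eq m k ls hk hcard
  have : 2 * ls.length * m = 4 * k * m + 2 * m := by rw [hk]; ring
  omega

/-- Lemma `lem:hatsum`: for a path with an odd number `n` of vertices, all of whose lists
have size `4m`, `S_L(P) ≥ 2nm − 2m + |X̂_1| + |X̂_n| + |A|`. -/
theorem SL_ge_hatsum (m : ℕ) (hm : 0 < m) (ls : List (Finset ℕ))
    (hodd : Odd ls.length)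
    (hcard : ∀ i, i < ls.length → (ls.getD i ∅).card = 4 * m) :
    2 * ls.length * m - 2 * m + (hatX1 ls).card + (hatXn ls).card + (Aset ls).card
      ≤ SL ls :=
  SL_ge_hatsum_general m ls hodd hcard
end
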